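/- arXiv:math/0108217 — 4 statements merged into one kernel-verified Lean document; each statement's English description precedes it below -/
import Mathlib

section
/- Let x₁, x₂, x₃, x₄ ∈ ℝ³ with no three of them coplanar (every three of the vectors are linearly independent). Then there exists a linear functional f with f(xᵢ) > 0 for all i if and only if there exist indices 1 ≤ i < j ≤ 4 such that, letting g(y) = det(xᵢ, xⱼ, y), the two remaining vectors x_k, x_l satisfy g(x_k)·g(x_l) > 0. -/
noncomputable def det3 (a b c : Fin 3 → ℝ) : ℝ := Matrix.det (Matrix.transpose (Matrix.of ![a, b, c]))

lemma det3_eq (p q r : Fin 3 → ℝ) : det3 p q r =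
    p 0 * q 1 * r 2 - p 0 * q 2 * r 1 - p 1 * q 0 * r 2
      + p 1 * q 2 * r 0 + p 2 * q 0 * r 1 - p 2 * q 1 * r 0 := by
  rw [det3, Matrix.det_transpose]
  simp [Matrix.det_fin_three]

lemma det3_ne (a b c : Fin 3 → ℝ) (h : LinearIndependent ℝ ![a,b,c]) : det3 a b c ≠ 0 := by
  rw [det3, Matrix.det_transpose]
  have : IsUnit (Matrix.of ![a,b,c]) := Matrix.linearIndependent_rows_iff_isUnit.mp h
  simpa [isUnit_iff_ne_zero] using this.map Matrix.detMonoidHom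

lemma pos_comb3 (a b c : ℝ) (h : 0 < a ∨ 0 < b ∨ 0 < c) :
    ∃ p q r : ℝ, 0 < p ∧ 0 < q ∧ 0 < r ∧ 0 < a*p + b*q + c*r := by
  rcases h with h | h | h
  · refine ⟨(1+|b|+|c|)/a, 1, 1, div_pos (by positivity) h, one_pos, one_pos, ?_⟩
    have h1 : a * ((1+|b|+|c|)/a) = 1+|b|+|c| := by field_simp
    nlinarith [neg_abs_le b, neg_abs_le c]
  · refine ⟨1, (1+|a|+|c|)/b, 1, one_pos, div_pos (by positivity) h, one_pos, ?_⟩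
    have h1 : b * ((1+|a|+|c|)/b) = 1+|a|+|c| := by field_simp
    nlinarith [neg_abs_le a, neg_abs_le c]
  · refine ⟨1, 1, (1+|a|+|b|)/c, one_pos, one_pos, div_pos (by positivity) h, ?_⟩
    have h1 : c * ((1+|a|+|b|)/c) = 1+|a|+|b| := by field_simp
    nlinarith [neg_abs_le a, neg_abs_le b]

set_option maxHeartbeats 2000000 in
theorem supporting_plane_iff_pair (x : Fin 4 → (Fin 3 → ℝ))
    (hindep : ∀ i j k : Fin 4, i ≠ j → i ≠ k → j ≠ k →
      LinearIndependent ℝ ![x i, x j, x k]) :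
    (∃ f : (Fin 3 → ℝ) →ₗ[ℝ] ℝ, ∀ i, 0 < f (x i)) ↔
    (∃ i j k l : Fin 4, i < j ∧ i ≠ k ∧ i ≠ l ∧ j ≠ k ∧ j ≠ l ∧ k ≠ l ∧
      0 < det3 (x i) (x j) (x k) * det3 (x i) (x j) (x l)) := by
  have h012 := hindep 0 1 2 (by decide) (by decide) (by decide)
  let B := basisOfLinearIndependentOfCardEqFinrank h012 (by simp)
  have hB : ∀ i : Fin 3, B i = ![x 0, x 1, x 2] i := fun i => by
    rw [show B = basisOfLinearIndependentOfCardEqFinrank h012 (by simp) from rfl,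
      coe_basisOfLinearIndependentOfCardEqFinrank]
  have hB0 : B 0 = x 0 := by rw [hB]; rfl
  have hB1 : B 1 = x 1 := by rw [hB]; rfl
  have hB2 : B 2 = x 2 := by rw [hB]; rfl
  clear_value B
  set a := B.repr (x 3) 0 with ha
  set b := B.repr (x 3) 1 with hb
  set c := B.repr (x 3) 2 with hc
  have hx3 : x 3 = a • x 0 + b • x 1 + c • x 2 := by
    have := B.sum_repr (x 3)
    rw [Fin.sum_univ_three] at this
    rw [← this, hB0, hB1, hB2, add_assoc]
  have hcomp : ∀ i, x 3 i = a * x 0 i + b * x 1 i + c * x 2 i := fun i => by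
    rw [hx3]; simp
  have hD := det3_ne _ _ _ h012
  have hDD : 0 < det3 (x 0) (x 1) (x 2) * det3 (x 0) (x 1) (x 2) := mul_self_pos.mpr hD
  -- determinant identities
  have e1 : det3 (x 0) (x 1) (x 3) = c * det3 (x 0) (x 1) (x 2) := by
    simp only [det3_eq, hcomp]; ring
  have e2 : det3 (x 0) (x 2) (x 3) = -b * det3 (x 0) (x 1) (x 2) := by
    simp only [det3_eq, hcomp]; ring
  have e3 : det3 (x 1) (x 2) (x 3) = a * det3 (x 0) (x 1) (x 2) := by
    simp only [det3_eq, hcomp]; ring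
  have e4 : det3 (x 0) (x 2) (x 1) = -det3 (x 0) (x 1) (x 2) := by
    simp only [det3_eq]; ring
  have e5 : det3 (x 1) (x 2) (x 0) = det3 (x 0) (x 1) (x 2) := by
    simp only [det3_eq]; ring
  have e6 : det3 (x 0) (x 3) (x 1) = -c * det3 (x 0) (x 1) (x 2) := by
    simp only [det3_eq, hcomp]; ring
  have e7 : det3 (x 0) (x 3) (x 2) = b * det3 (x 0) (x 1) (x 2) := by
    simp only [det3_eq, hcomp]; ring
  have e8 : det3 (x 1) (x 3) (x 0) = c * det3 (x 0) (x 1) (x 2) := by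
    simp only [det3_eq, hcomp]; ring
  have e9 : det3 (x 1) (x 3) (x 2) = -a * det3 (x 0) (x 1) (x 2) := by
    simp only [det3_eq, hcomp]; ring
  have e10 : det3 (x 2) (x 3) (x 0) = -b * det3 (x 0) (x 1) (x 2) := by
    simp only [det3_eq, hcomp]; ring
  have e11 : det3 (x 2) (x 3) (x 1) = a * det3 (x 0) (x 1) (x 2) := by
    simp only [det3_eq, hcomp]; ring
  constructor
  · rintro ⟨f, hf⟩
    have hval : f (x 3) = a * f (x 0) + b * f (x 1) + c * f (x 2) := by
      rw [hx3]; simp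
    have habc : 0 < a ∨ 0 < b ∨ 0 < c := by
      by_contra hcon
      push_neg at hcon
      obtain ⟨ha', hb', hc'⟩ := hcon
      nlinarith [hf 0, hf 1, hf 2, hf 3,
        mul_nonneg (neg_nonneg.2 ha') (hf 0).le,
        mul_nonneg (neg_nonneg.2 hb') (hf 1).le,
        mul_nonneg (neg_nonneg.2 hc') (hf 2).le]
    rcases habc with h | h | h
    · exact ⟨1, 2, 0, 3, by decide, by decide, by decide, by decide, by decide, by decide,
        by rw [e5, e3]; nlinarith⟩
    · exact ⟨0, 2, 1, 3, by decide, by decide, by decide, by decide, by decide, by decide,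
        by rw [e4, e2]; nlinarith⟩
    · exact ⟨0, 1, 2, 3, by decide, by decide, by decide, by decide, by decide, by decide,
        by rw [e1]; nlinarith⟩
  · rintro ⟨i, j, k, l, hij, hik, hil, hjk, hjl, hkl, hprod⟩
    have habc : 0 < a ∨ 0 < b ∨ 0 < c := by
      by_contra hcon
      push_neg at hcon
      obtain ⟨ha', hb', hc'⟩ := hcon
      have n1 : det3 (x 0) (x 1) (x 2) * det3 (x 0) (x 1) (x 3) ≤ 0 := by
        rw [e1]; nlinarith [mul_nonneg (neg_nonneg.2 hc') hDD.le]
      have n2 : det3 (x 0) (x 2) (x 1) * det3 (x 0) (x 2) (x 3) ≤ 0 := by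
        rw [e4, e2]; nlinarith [mul_nonneg (neg_nonneg.2 hb') hDD.le]
      have n3 : det3 (x 0) (x 3) (x 1) * det3 (x 0) (x 3) (x 2) ≤ 0 := by
        rw [e6, e7]
        nlinarith [mul_nonneg (mul_nonneg (neg_nonneg.2 hb') (neg_nonneg.2 hc')) hDD.le]
      have n4 : det3 (x 1) (x 2) (x 0) * det3 (x 1) (x 2) (x 3) ≤ 0 := by
        rw [e5, e3]; nlinarith [mul_nonneg (neg_nonneg.2 ha') hDD.le]
      have n5 : det3 (x 1) (x 3) (x 0) * det3 (x 1) (x 3) (x 2) ≤ 0 := by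
        rw [e8, e9]
        nlinarith [mul_nonneg (mul_nonneg (neg_nonneg.2 ha') (neg_nonneg.2 hc')) hDD.le]
      have n6 : det3 (x 2) (x 3) (x 0) * det3 (x 2) (x 3) (x 1) ≤ 0 := by
        rw [e10, e11]
        nlinarith [mul_nonneg (mul_nonneg (neg_nonneg.2 ha') (neg_nonneg.2 hb')) hDD.le]
      clear hx3 hcomp hB hB0 hB1 hB2 hindep h012 ha hb hc e1 e2 e3 e4 e5 e6 e7 e8 e9 e10 e11
      have four : ∀ m : Fin 4, m = 0 ∨ m = 1 ∨ m = 2 ∨ m = 3 := by decide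
      rcases four i with rfl | rfl | rfl | rfl <;> rcases four j with rfl | rfl | rfl | rfl <;>
        first
          | exact absurd hij (by decide)
          | (rcases four k with rfl | rfl | rfl | rfl <;>
              first
                | exact absurd hik (by decide)
                | exact absurd hjk (by decide)
                | (rcases four l with rfl | rfl | rfl | rfl <;>
                    first
                      | exact absurd hil (by decide)
                      | exact absurd hjl (by decide)
                      | exact absurd hkl (by decide)
                      | exact absurd hprod (not_lt.2 (by linarith [n1, n2, n3, n4, n5, n6]))))
    obtain ⟨p, q, r, hp, hq, hr, hsum⟩ := pos_comb3 a b c habc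
    refine ⟨p • B.coord 0 + q • B.coord 1 + r • B.coord 2, ?_⟩
    intro i
    fin_cases i
    · simpa [Module.Basis.coord_apply, ← hB0, Module.Basis.repr_self] using hp
    · simpa [Module.Basis.coord_apply, ← hB1, Module.Basis.repr_self] using hq
    · simpa [Module.Basis.coord_apply, ← hB2, Module.Basis.repr_self] using hr
    · simpa [Module.Basis.coord_apply, ← ha, ← hb, ← hc, mul_comm] using hsum
end

section
/- Let x₁, x₂, x₃, x₄ ∈ ℝ³ with every three of them linearly independent. A linear functional f with f(xᵢ) > 0 for all i fails to exist if and only if the four determinants det(x₁,x₂,x₃), det(x₁,x₄,x₂), det(x₃,x₂,x₄), det(x₁,x₃,x₄) all have the same sign (all positive or all negative). -/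
section OrderedField

variable {K : Type*} [Field K] [LinearOrder K] [IsStrictOrderedRing K]

theorem exists_forall_pos_and_sum_mul_pos_iff {ι : Type*} [Fintype ι] (c : ι → K) :
    (∃ t : ι → K, (∀ j, 0 < t j) ∧ 0 < ∑ j, c j * t j) ↔ ∃ i, 0 < c i := by
  classical
  constructor
  · rintro ⟨t, ht, hsum⟩
    by_contra! hc
    exact hsum.not_ge <|
      Finset.sum_nonpos fun j _ => mul_nonpos_of_nonpos_of_nonneg (hc j) (ht j).le
  · rintro ⟨i, hi⟩
    set S := ∑ j, c j
    refine ⟨fun j => 1 + if j = i then (|S| + 1) / c i else 0, fun j => ?_, ?_⟩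
    · dsimp only
      split_ifs <;> positivity
    · have hsum : ∑ j, c j * (1 + if j = i then (|S| + 1) / c i else 0) = S + (|S| + 1) := by
        simp [mul_add, Finset.sum_add_distrib, S, mul_div_cancel₀ _ hi.ne']
      rw [hsum]
      linarith [neg_abs_le S]

theorem Module.Basis.exists_forall_pos_apply_and_pos_apply_sum_iff {ι V : Type*} [Fintype ι]
    [AddCommGroup V] [Module K V] (b : Module.Basis ι K V) (c : ι → K) :
    (∃ f : V →ₗ[K] K, (∀ i, 0 < f (b i)) ∧ 0 < f (∑ i, c i • b i)) ↔ ∃ i, 0 < c i := by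
  rw [← exists_forall_pos_and_sum_mul_pos_iff]
  constructor
  · rintro ⟨f, hf, hsum⟩
    exact ⟨f ∘ b, hf, by simpa [mul_comm] using hsum⟩
  · rintro ⟨t, ht, hsum⟩
    exact ⟨b.constr K t, by simpa [b.constr_basis] using ht,
      by simpa [b.constr_basis, mul_comm] using hsum⟩

theorem div_pos_and_div_pos_and_div_pos_iff {a b c d : K} :
    (0 < a / d ∧ 0 < b / d ∧ 0 < c / d) ↔
      (0 < d ∧ 0 < a ∧ 0 < b ∧ 0 < c) ∨ (d < 0 ∧ a < 0 ∧ b < 0 ∧ c < 0) := by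
  rcases lt_trichotomy d 0 with hd | rfl | hd
  · simp [div_pos_iff, hd, hd.asymm]
  · simp
  · simp [hd, hd.asymm]

theorem not_neg_div_pos_iff {a d : K} (ha : a ≠ 0) (hd : d ≠ 0) : ¬0 < -a / d ↔ 0 < a / d := by
  rw [not_lt, neg_div, neg_nonpos, (div_ne_zero ha hd).symm.le_iff_lt]

end OrderedField

theorem det3_ne_zero_of_linearIndependent {a b c : Fin 3 → ℝ}
    (h : LinearIndependent ℝ ![a, b, c]) : det3 a b c ≠ 0 := by
  rw [det3, Matrix.det_transpose]
  exact ((Matrix.isUnit_iff_isUnit_det _).mp (Matrix.linearIndependent_rows_iff_isUnit.mp h)).ne_zero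

theorem det3_smul_add_eq_zero (a b c d : Fin 3 → ℝ) :
    det3 c b d • a + det3 a c d • b + det3 a d b • c + det3 a b c • d = 0 := by
  ext j
  fin_cases j <;> simp [det3, Matrix.det_fin_three] <;> ring

theorem eq_smul_add_smul_add_smul_of_det3_ne_zero {a b c : Fin 3 → ℝ} (d : Fin 3 → ℝ)
    (h : det3 a b c ≠ 0) :
    d = (-det3 c b d / det3 a b c) • a + (-det3 a c d / det3 a b c) • b +
      (-det3 a d b / det3 a b c) • c := by
  linear_combination (norm := skip) (det3 a b c)⁻¹ • det3_smul_add_eq_zero a b c d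
  match_scalars <;> field_simp <;> ring

theorem algorithm_four_dets (x : Fin 4 → (Fin 3 → ℝ))
    (hindep : ∀ i j k : Fin 4, i ≠ j → i ≠ k → j ≠ k →
      LinearIndependent ℝ ![x i, x j, x k]) :
    (¬ ∃ f : (Fin 3 → ℝ) →ₗ[ℝ] ℝ, ∀ i, 0 < f (x i)) ↔
    ((0 < det3 (x 0) (x 1) (x 2) ∧ 0 < det3 (x 0) (x 3) (x 1) ∧
      0 < det3 (x 2) (x 1) (x 3) ∧ 0 < det3 (x 0) (x 2) (x 3)) ∨
     (det3 (x 0) (x 1) (x 2) < 0 ∧ det3 (x 0) (x 3) (x 1) < 0 ∧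
      det3 (x 2) (x 1) (x 3) < 0 ∧ det3 (x 0) (x 2) (x 3) < 0)) := by
  have hdet (i j k : Fin 4) (hij : i ≠ j) (hik : i ≠ k) (hjk : j ≠ k) :
      det3 (x i) (x j) (x k) ≠ 0 :=
    det3_ne_zero_of_linearIndependent (hindep i j k hij hik hjk)
  have h0 := hdet 0 1 2 (by decide) (by decide) (by decide)
  have h1 := hdet 0 3 1 (by decide) (by decide) (by decide)
  have h2 := hdet 2 1 3 (by decide) (by decide) (by decide)
  have h3 := hdet 0 2 3 (by decide) (by decide) (by decide)
  let b := basisOfLinearIndependentOfCardEqFinrank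
    (hindep 0 1 2 (by decide) (by decide) (by decide)) (by simp)
  have hb : ⇑b = ![x 0, x 1, x 2] := coe_basisOfLinearIndependentOfCardEqFinrank _ _
  set D₀ := det3 (x 0) (x 1) (x 2)
  set D₁ := det3 (x 0) (x 3) (x 1)
  set D₂ := det3 (x 2) (x 1) (x 3)
  set D₃ := det3 (x 0) (x 2) (x 3)
  have hx3 : x 3 = ∑ i, ![-D₂ / D₀, -D₃ / D₀, -D₁ / D₀] i • b i := by
    simpa [Fin.sum_univ_three, hb] using eq_smul_add_smul_add_smul_of_det3_ne_zero (x 3) h0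
  have hexists : (∃ f : (Fin 3 → ℝ) →ₗ[ℝ] ℝ, ∀ i, 0 < f (x i)) ↔
      ∃ i, 0 < ![-D₂ / D₀, -D₃ / D₀, -D₁ / D₀] i := by
    rw [← b.exists_forall_pos_apply_and_pos_apply_sum_iff, ← hx3]
    refine exists_congr fun f => ?_
    simp [Fin.forall_fin_succ, hb, and_assoc]
  rw [hexists, ← div_pos_and_div_pos_and_div_pos_iff, and_rotate, ← not_neg_div_pos_iff h1 h0,
    ← not_neg_div_pos_iff h2 h0, ← not_neg_div_pos_iff h3 h0]
  simp [Fin.exists_fin_succ]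
end

section
/- Let x₁,…,x_k ∈ ℝ² be nonzero vectors. A linear functional f with f(xᵢ) > 0 for all i exists if and only if there is a permutation σ of {1,…,k} such that angle(x_{σ(1)}, x_{σ(k)}) = ∑_{i=1}^{k−1} angle(x_{σ(i)}, x_{σ(i+1)}) and angle(x_{σ(1)}, x_{σ(k)}) < π. -/
/-!
If `f = ⟪v, ·⟫` is positive on every `xᵢ`, the oriented angles `ψᵢ` from `v` to the `xᵢ` lie in
`(-π/2, π/2)`. Sorting the vectors by `ψᵢ` turns every unoriented angle between them into a
difference `ψⱼ - ψᵢ`, so the consecutive angles telescope to the angle between the extreme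
vectors, which is less than `π`.

Conversely, if the consecutive angles add up to the angle `A < π` between the extreme vectors
`a` and `b`, the triangle inequality for angles forces `angle a xᵢ + angle xᵢ b = A` for every `i`.
Then `a / ‖a‖ + b / ‖b‖` has inner product `‖xᵢ‖ (cos (angle a xᵢ) + cos (angle xᵢ b)) > 0`
with `xᵢ`.
-/

open InnerProductGeometry Real RealInnerProductSpace Finset

variable {V : Type*} [NormedAddCommGroup V] [InnerProductSpace ℝ V]

theorem angle_le_sum_angle_succ (z : ℕ → V) {m n : ℕ} (hm : z m ≠ 0) (hmn : m ≤ n) :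
    angle (z m) (z n) ≤ ∑ j ∈ Ico m n, angle (z j) (z (j + 1)) := by
  induction n, hmn using Nat.le_induction with
  | base => simp [angle_self hm]
  | succ n hmn ih =>
    rw [sum_Ico_succ_top hmn]
    linarith [angle_le_angle_add_angle (z m) (z n) (z (n + 1))]

theorem angle_add_angle_eq_of_angle_eq_sum (z : ℕ → V) {m n : ℕ} (h0 : z 0 ≠ 0)
    (hm : z m ≠ 0) (hmn : m ≤ n)
    (h : angle (z 0) (z n) = ∑ j ∈ range n, angle (z j) (z (j + 1))) :
    angle (z 0) (z m) + angle (z m) (z n) = angle (z 0) (z n) := by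
  have hsplit := sum_Ico_consecutive (fun j => angle (z j) (z (j + 1))) (Nat.zero_le m) hmn
  rw [range_eq_Ico] at h
  linarith [angle_le_sum_angle_succ z h0 (Nat.zero_le m), angle_le_sum_angle_succ z hm hmn,
    angle_le_angle_add_angle (z 0) (z m) (z n)]

/-- The vectors `y 0, …, y n` are met in this order when turning from `y 0` to `y n` through
an angle less than `π`. -/
def InAngularOrder {n : ℕ} (y : Fin (n + 1) → V) : Prop :=
  angle (y 0) (y (Fin.last n)) = ∑ i : Fin n, angle (y i.castSucc) (y i.succ) ∧
    angle (y 0) (y (Fin.last n)) < π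

theorem InAngularOrder.angle_add_angle_eq {n : ℕ} {y : Fin (n + 1) → V} (h : InAngularOrder y)
    (hy : ∀ i, y i ≠ 0) (m : Fin (n + 1)) :
    angle (y 0) (y m) + angle (y m) (y (Fin.last n)) = angle (y 0) (y (Fin.last n)) := by
  have hval : ∀ i : Fin (n + 1), Fin.clamp i n = i := fun i => Fin.ext (min_eq_left i.is_le)
  have hzero : Fin.clamp 0 n = 0 := hval 0
  have hlast : Fin.clamp n n = Fin.last n := hval (Fin.last n)
  have hcastSucc : ∀ i : Fin n, Fin.clamp i n = i.castSucc := fun i => hval i.castSucc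
  have hsucc : ∀ i : Fin n, Fin.clamp (i + 1) n = i.succ := fun i => hval i.succ
  have key := angle_add_angle_eq_of_angle_eq_sum (fun j => y (Fin.clamp j n)) (hy _) (hy _)
    m.is_le ?_
  · simpa only [hval, hzero, hlast] using key
  · rw [← Fin.sum_univ_eq_sum_range
      (fun j => angle (y (Fin.clamp j n)) (y (Fin.clamp (j + 1) n)))]
    simpa only [hzero, hlast, hcastSucc, hsucc] using h.1

theorem Real.cos_add_cos_pos {α β : ℝ} (hα : 0 ≤ α) (hβ : 0 ≤ β) (h : α + β < π) :
    0 < cos α + cos β := by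
  rw [cos_add_cos]
  have h₁ : 0 < cos ((α + β) / 2) := cos_pos_of_mem_Ioo ⟨by linarith, by linarith⟩
  have h₂ : 0 < cos ((α - β) / 2) := cos_pos_of_mem_Ioo ⟨by linarith, by linarith⟩
  positivity

theorem inner_pos_of_angle_add_angle_eq {a b y : V} (ha : a ≠ 0) (hb : b ≠ 0) (hy : y ≠ 0)
    (h : angle a y + angle y b = angle a b) (hπ : angle a b < π) :
    0 < ⟪‖a‖⁻¹ • a + ‖b‖⁻¹ • b, y⟫ := by
  have hexp : ⟪‖a‖⁻¹ • a + ‖b‖⁻¹ • b, y⟫ = ‖y‖ * (cos (angle a y) + cos (angle b y)) := by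
    rw [inner_add_left, real_inner_smul_left, real_inner_smul_left,
      ← cos_angle_mul_norm_mul_norm a y, ← cos_angle_mul_norm_mul_norm b y]
    field_simp
  rw [hexp, angle_comm b]
  exact mul_pos (norm_pos_iff.2 hy)
    (Real.cos_add_cos_pos (angle_nonneg _ _) (angle_nonneg _ _) (h ▸ hπ))

theorem InAngularOrder.exists_inner_pos {n : ℕ} {y : Fin (n + 1) → V} (h : InAngularOrder y)
    (hy : ∀ i, y i ≠ 0) : ∃ u : V, ∀ i, 0 < ⟪u, y i⟫ :=
  ⟨_, fun i => inner_pos_of_angle_add_angle_eq (hy 0) (hy _) (hy i)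
    (h.angle_add_angle_eq hy i) h.2⟩

theorem angle_lt_pi_div_two_of_inner_pos {v w : V} (h : 0 < ⟪v, w⟫) : angle v w < π / 2 := by
  have hcos : 0 < cos (angle v w) := by
    rw [← cos_angle_mul_norm_mul_norm] at h
    exact pos_of_mul_pos_left h (by positivity)
  by_contra! hle
  exact hcos.not_ge (cos_nonpos_of_pi_div_two_le_of_le hle (by linarith [angle_le_pi v w]))

namespace Orientation

variable [Fact (Module.finrank ℝ V = 2)] (o : Orientation ℝ V (Fin 2))

theorem angle_eq_abs_toReal_oangle_sub {v a b : V} (hv : v ≠ 0) (ha : a ≠ 0) (hb : b ≠ 0)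
    (h₁ : -π < (o.oangle v b).toReal - (o.oangle v a).toReal)
    (h₂ : (o.oangle v b).toReal - (o.oangle v a).toReal ≤ π) :
    angle a b = |(o.oangle v b).toReal - (o.oangle v a).toReal| := by
  rw [o.angle_eq_abs_oangle_toReal ha hb, ← o.oangle_sub_left hv ha hb,
    ← Real.Angle.toReal_coe_eq_self_iff.2 ⟨h₁, h₂⟩, Real.Angle.coe_sub,
    Real.Angle.coe_toReal, Real.Angle.coe_toReal]

end Orientation

theorem exists_perm_inAngularOrder_of_inner_pos [Fact (Module.finrank ℝ V = 2)] {n : ℕ}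
    (y : Fin (n + 1) → V) {v : V} (h : ∀ i, 0 < ⟪v, y i⟫) :
    ∃ σ : Equiv.Perm (Fin (n + 1)), InAngularOrder (y ∘ σ) := by
  have := FiniteDimensional.of_fact_finrank_eq_two (K := ℝ) (V := V)
  obtain ⟨o⟩ : Nonempty (Orientation ℝ V (Fin 2)) :=
    ⟨(Module.finBasisOfFinrankEq ℝ V Fact.out).orientation⟩
  have hy : ∀ i, y i ≠ 0 := fun i hi => by simpa [hi] using h i
  have hv : v ≠ 0 := fun hv => by simpa [hv] using h 0
  set ψ : Fin (n + 1) → ℝ := fun i => (o.oangle v (y i)).toReal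
  have hψ : ∀ i, |ψ i| < π / 2 := fun i => by
    rw [← o.angle_eq_abs_oangle_toReal hv (hy i)]
    exact angle_lt_pi_div_two_of_inner_pos (h i)
  set σ := Tuple.sort ψ
  have hangle : ∀ i j, i ≤ j → angle (y (σ i)) (y (σ j)) = ψ (σ j) - ψ (σ i) := by
    intro i j hij
    have hmono : ψ (σ i) ≤ ψ (σ j) := Tuple.monotone_sort ψ hij
    obtain ⟨hi₁, hi₂⟩ := abs_lt.1 (hψ (σ i))
    obtain ⟨hj₁, hj₂⟩ := abs_lt.1 (hψ (σ j))
    rw [o.angle_eq_abs_toReal_oangle_sub hv (hy _) (hy _) (by linarith) (by linarith),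
      abs_of_nonneg (sub_nonneg.2 hmono)]
  refine ⟨σ, ?_, ?_⟩
  · simp only [Function.comp_apply]
    rw [hangle _ _ (Fin.zero_le _), sum_congr rfl fun i _ => hangle _ _ i.castSucc_le_succ,
      sum_sub_distrib]
    linarith [Fin.sum_univ_succ (fun i => ψ (σ i)), Fin.sum_univ_castSucc (fun i => ψ (σ i))]
  · simp only [Function.comp_apply]
    rw [hangle _ _ (Fin.zero_le _)]
    linarith [abs_lt.1 (hψ (σ 0)), abs_lt.1 (hψ (σ (Fin.last n)))]

theorem planar_supporting_line_test (k : ℕ) (hk : 0 < k)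
    (x : Fin k → EuclideanSpace ℝ (Fin 2)) (hx : ∀ i, x i ≠ 0) :
    (∃ f : EuclideanSpace ℝ (Fin 2) →ₗ[ℝ] ℝ, ∀ i, 0 < f (x i)) ↔
    (∃ σ : Equiv.Perm (Fin k),
      InnerProductGeometry.angle (x (σ ⟨0, hk⟩)) (x (σ ⟨k - 1, Nat.sub_lt hk one_pos⟩)) =
        ∑ i : Fin (k - 1),
          InnerProductGeometry.angle (x (σ (Fin.castLE (Nat.sub_le k 1) i)))
            (x (σ ⟨i + 1, by omega⟩)) ∧
      InnerProductGeometry.angle (x (σ ⟨0, hk⟩)) (x (σ ⟨k - 1, Nat.sub_lt hk one_pos⟩)) <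
        Real.pi) := by
  -- With `k = n + 1`, the condition on `σ` unfolds definitionally to `InAngularOrder (x ∘ σ)`.
  obtain ⟨n, rfl⟩ := Nat.exists_eq_add_of_lt hk
  constructor
  · rintro ⟨f, hf⟩
    have : Fact (Module.finrank ℝ (EuclideanSpace ℝ (Fin 2)) = 2) := ⟨finrank_euclideanSpace_fin⟩
    set v := (InnerProductSpace.toDual ℝ _).symm (LinearMap.toContinuousLinearMap f)
    have hv : ∀ i, 0 < ⟪v, x i⟫ := fun i => by
      simpa [v, InnerProductSpace.toDual_symm_apply] using hf i
    exact exists_perm_inAngularOrder_of_inner_pos x hv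
  · rintro ⟨σ, hσ⟩
    obtain ⟨u, hu⟩ := InAngularOrder.exists_inner_pos (y := x ∘ σ) hσ fun i => hx (σ i)
    exact ⟨innerₗ _ u, fun i => by simpa using hu (σ.symm i)⟩
end

section
/- Let x₁, x₂, x₃, x₄ ∈ ℝ³ be such that every three of the vectors are linearly independent. If there exists a linear functional f with f(xᵢ) > 0 for all i, then there exist indices 1 ≤ i < j ≤ 4, i ≠ j, and a linear functional g with g(xᵢ) = g(xⱼ) = 0 and g(x_k) > 0 for the two remaining indices k. -/
theorem rotate_to_two_vectors (x : Fin 4 → (Fin 3 → ℝ))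
    (hindep : ∀ i j k : Fin 4, i ≠ j → i ≠ k → j ≠ k →
      LinearIndependent ℝ ![x i, x j, x k])
    (hf : ∃ f : (Fin 3 → ℝ) →ₗ[ℝ] ℝ, ∀ i, 0 < f (x i)) :
    ∃ i j : Fin 4, i < j ∧ ∃ g : (Fin 3 → ℝ) →ₗ[ℝ] ℝ,
      g (x i) = 0 ∧ g (x j) = 0 ∧ ∀ k, k ≠ i → k ≠ j → 0 < g (x k) := by
  obtain ⟨f, hf⟩ := hf
  have hli : LinearIndependent ℝ ![x 0, x 1, x 2] :=
    hindep 0 1 2 (by decide) (by decide) (by decide)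
  have hcard : Fintype.card (Fin 3) = Module.finrank ℝ (Fin 3 → ℝ) := by simp
  let B := basisOfLinearIndependentOfCardEqFinrank hli hcard
  have hB : ∀ m : Fin 3, B m = ![x 0, x 1, x 2] m := fun m => by
    simp [B, coe_basisOfLinearIndependentOfCardEqFinrank]
  have hB0 : B 0 = x 0 := hB 0
  have hB1 : B 1 = x 1 := hB 1
  have hB2 : B 2 = x 2 := hB 2
  have hrepr : x 3 = ∑ m : Fin 3, B.repr (x 3) m • B m := (B.sum_repr (x 3)).symm
  have hpos : ∃ m : Fin 3, 0 < B.repr (x 3) m := by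
    by_contra h
    push_neg at h
    have hle : f (x 3) ≤ 0 := by
      conv_lhs => rw [hrepr]
      rw [map_sum]
      apply Finset.sum_nonpos
      intro m _
      rw [map_smul, smul_eq_mul]
      have h1 : 0 < f (B m) := by
        have : m = 0 ∨ m = 1 ∨ m = 2 := by omega
        rcases this with rfl | rfl | rfl
        · rw [hB0]; exact hf 0
        · rw [hB1]; exact hf 1
        · rw [hB2]; exact hf 2
      exact mul_nonpos_of_nonpos_of_nonneg (h m) h1.le
    exact absurd (hf 3) (by linarith)
  obtain ⟨m, hm⟩ := hpos
  have hcoord : ∀ n : Fin 3, B.coord m (B n) = if n = m then 1 else 0 := fun n => by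
    simp [Module.Basis.coord_apply, Finsupp.single_apply]
  have hcoord3 : B.coord m (x 3) = B.repr (x 3) m := by
    simp [Module.Basis.coord_apply]
  have hkcases : ∀ k : Fin 4, k = 0 ∨ k = 1 ∨ k = 2 ∨ k = 3 := by omega
  have hmcases : m = 0 ∨ m = 1 ∨ m = 2 := by omega
  rcases hmcases with rfl | rfl | rfl
  · refine ⟨1, 2, by decide, B.coord 0, ?_, ?_, ?_⟩
    · rw [← hB1, hcoord 1]; norm_num; try decide
    · rw [← hB2, hcoord 2]; norm_num; try decide
    · intro k hk1 hk2
      rcases hkcases k with rfl | rfl | rfl | rfl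
      · rw [← hB0, hcoord 0]; norm_num; try decide
      · exact absurd rfl hk1
      · exact absurd rfl hk2
      · rw [hcoord3]; exact hm
  · refine ⟨0, 2, by decide, B.coord 1, ?_, ?_, ?_⟩
    · rw [← hB0, hcoord 0]; norm_num; try decide
    · rw [← hB2, hcoord 2]; norm_num; try decide
    · intro k hk1 hk2
      rcases hkcases k with rfl | rfl | rfl | rfl
      · exact absurd rfl hk1
      · rw [← hB1, hcoord 1]; norm_num; try decide
      · exact absurd rfl hk2
      · rw [hcoord3]; exact hm
  · refine ⟨0, 1, by decide, B.coord 2, ?_, ?_, ?_⟩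
    · rw [← hB0, hcoord 0]; norm_num; try decide
    · rw [← hB1, hcoord 1]; norm_num; try decide
    · intro k hk1 hk2
      rcases hkcases k with rfl | rfl | rfl | rfl
      · exact absurd rfl hk1
      · exact absurd rfl hk2
      · rw [← hB2, hcoord 2]; norm_num; try decide
      · rw [hcoord3]; exact hm
end
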